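/- Let f : ℝ × ℝ^n → ℝ^n, g : ℝ × ℝ^n → ℝ^{n×m} and φ : ℝ × ℝ^n → ℝ^r be infinitely differentiable. Fix k ∈ {1,…,r} and ρ_k ≥ 1, and suppose L_g L_f^i φ_k(t,x) = 0 for all (t,x) and all 0 ≤ i ≤ ρ_k − 2. Let u : I → ℝ^m be continuous on an open interval I and let x : I → ℝ^n be differentiable with ẋ(t) = f(t,x(t)) + g(t,x(t))u(t) for all t ∈ I. Suppose z_k : I → ℝ is (ρ_k−1)-times continuously differentiable, z_k(t) > 0 for all t ∈ I, and φ_k(t,x(t)) + z_k(t)²/2 = 0 for all t ∈ I. Then for every t ∈ I: z_k(t) = √(−2·φ_k(t,x(t))), and for every 1 ≤ i ≤ ρ_k − 1, z_k^{(i)}(t) = −( L_f^i φ_k(t,x(t)) + S_{k,i−1}(t) ) / z_k(t), where S_{k,i−1}(t) := (1/2)·Σ_{j=1}^{i−1} binom(i,j)·z_k^{(i−j)}(t)·z_k^{(j)}(t). -/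

import Mathlib

/-! Along a solution of `ẋ = f + g u`, the chain rule gives
`d/dt ψ(t, x(t)) = L_f ψ(t, x(t)) + L_g ψ(t, x(t)) · u(t)`. Since `L_g L_f^j φ_k ≡ 0` for
`j ≤ ρ_k - 2`, the `i`-th derivative of `φ_k(t, x(t))` is `L_f^i φ_k(t, x(t))` for `i ≤ ρ_k - 1`,
whatever `u` is. Differentiating `φ_k(t, x(t)) = -z_k(t)²/2` `i` times by the Leibniz rule, the two
extreme terms together give `z_k z_k^{(i)}`, which can be solved for `z_k^{(i)}` as `z_k > 0`. -/

noncomputable section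

open Real MeasureTheory Finset

/-- One-step Lie derivative of a scalar function `ψ` along the time-varying vector field `f`:
`L_f ψ (t,x) = (∂ₓ ψ)(t,x) · f(t,x) + (∂ₜ ψ)(t,x)`, expressed as the total (Fréchet)
derivative of `ψ` in the direction `(1, f(t,x))`. -/
def lieF {n : ℕ} (f : ℝ × (Fin n → ℝ) → Fin n → ℝ) (ψ : ℝ × (Fin n → ℝ) → ℝ) :
    ℝ × (Fin n → ℝ) → ℝ :=
  fun p => fderiv ℝ ψ p (1, f p)

/-- Iterated Lie derivative `L_f^j ψ`, with `L_f^0 ψ = ψ`. -/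
def lieFIter {n : ℕ} (f : ℝ × (Fin n → ℝ) → Fin n → ℝ) (ψ : ℝ × (Fin n → ℝ) → ℝ)
    (j : ℕ) : ℝ × (Fin n → ℝ) → ℝ :=
  (lieF f)^[j] ψ

/-- Mixed Lie derivative `L_g ψ (t,x) = (∂ₓ ψ)(t,x) · g(t,x) ∈ ℝ^{1×m}` as a row vector;
the `i`-th component is the derivative of `ψ` in the (space) direction of the `i`-th
column of `g`. -/
def lieG {n m : ℕ} (g : ℝ × (Fin n → ℝ) → Fin n → Fin m → ℝ)
    (ψ : ℝ × (Fin n → ℝ) → ℝ) : ℝ × (Fin n → ℝ) → Fin m → ℝ :=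
  fun p i => fderiv ℝ ψ p (0, fun a => g p a i)

open scoped ContDiff

theorem iteratedDerivWithin_eq_of_hasDerivAt {𝕜 E : Type*} [NontriviallyNormedField 𝕜]
    [NormedAddCommGroup E] [NormedSpace 𝕜 E] {F : ℕ → 𝕜 → E} {s : Set 𝕜} (hs : IsOpen s)
    {N : ℕ} (hF : ∀ j < N, ∀ t ∈ s, HasDerivAt (F j) (F (j + 1) t) t) :
    ∀ j ≤ N, ∀ t ∈ s, iteratedDerivWithin j (F 0) s t = F j t := by
  intro j
  induction j with
  | zero => simp
  | succ j ih =>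
    intro hj t ht
    rw [iteratedDerivWithin_succ]
    exact ((hF j hj t ht).hasDerivWithinAt.congr_of_mem (ih (by omega)) ht).derivWithin
      (hs.uniqueDiffWithinAt ht)

theorem iteratedDerivWithin_sq {z : ℝ → ℝ} {s : Set ℝ} {t : ℝ} {i : ℕ} (hs : UniqueDiffOn ℝ s)
    (ht : t ∈ s) (hz : ContDiffWithinAt ℝ i z s t) (hi : 1 ≤ i) :
    iteratedDerivWithin i (fun y => z y ^ 2) s t =
      2 * (z t * iteratedDerivWithin i z s t) + ∑ j ∈ Finset.Ico 1 i, (i.choose j : ℝ) *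
        iteratedDerivWithin (i - j) z s t * iteratedDerivWithin j z s t := by
  have hsq : (fun y => z y ^ 2) = z * z := funext fun y => sq (z y)
  rw [hsq, iteratedDerivWithin_mul ht hs hz hz, Finset.sum_range_succ, Finset.range_eq_Ico,
    Finset.sum_eq_sum_Ico_succ_bot hi]
  have hmid : ∀ j ∈ Finset.Ico 1 i, (i.choose j : ℝ) * iteratedDerivWithin j z s t *
      iteratedDerivWithin (i - j) z s t = (i.choose j : ℝ) *
        iteratedDerivWithin (i - j) z s t * iteratedDerivWithin j z s t :=
    fun _ _ => mul_right_comm _ _ _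
  rw [Finset.sum_congr rfl hmid]
  simp only [Nat.choose_zero_right, Nat.choose_self, Nat.cast_one, one_mul, tsub_zero, tsub_self,
    iteratedDerivWithin_zero]
  ring

section LieDerivative

variable {n m : ℕ} {f : ℝ × (Fin n → ℝ) → Fin n → ℝ} {ψ : ℝ × (Fin n → ℝ) → ℝ}

theorem lieFIter_succ (j : ℕ) : lieFIter f ψ (j + 1) = lieF f (lieFIter f ψ j) :=
  Function.iterate_succ_apply' _ _ _

theorem ContDiff.lieF (hf : ContDiff ℝ ∞ f) (hψ : ContDiff ℝ ∞ ψ) :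
    ContDiff ℝ ∞ (lieF f ψ) :=
  (hψ.fderiv_right le_rfl).clm_apply (contDiff_const.prodMk hf)

theorem ContDiff.lieFIter (hf : ContDiff ℝ ∞ f) (hψ : ContDiff ℝ ∞ ψ) (j : ℕ) :
    ContDiff ℝ ∞ (lieFIter f ψ j) := by
  induction j with
  | zero => exact hψ
  | succ j ih => rw [lieFIter_succ]; exact hf.lieF ih

variable {g : ℝ × (Fin n → ℝ) → Fin n → Fin m → ℝ} {u : ℝ → Fin m → ℝ} {x : ℝ → Fin n → ℝ}

theorem hasDerivAt_comp_trajectory {t : ℝ} (hψ : DifferentiableAt ℝ ψ (t, x t))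
    (hx : HasDerivAt x (fun a => f (t, x t) a + ∑ i, g (t, x t) a i * u t i) t) :
    HasDerivAt (fun τ => ψ (τ, x τ))
      (lieF f ψ (t, x t) + ∑ i, lieG g ψ (t, x t) i * u t i) t := by
  have hvel : ((1 : ℝ), fun a => f (t, x t) a + ∑ i, g (t, x t) a i * u t i)
      = ((1 : ℝ), f (t, x t)) + ∑ i, u t i • ((0 : ℝ), fun a => g (t, x t) a i) := by
    ext a
    · simp [Prod.fst_sum]
    · simp [Prod.snd_sum, Finset.sum_apply, mul_comm]
  refine (hψ.hasFDerivAt.comp_hasDerivAt t ((hasDerivAt_id t).prodMk hx)).congr_deriv ?_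
  rw [hvel, map_add, map_sum]
  simp only [map_smul, smul_eq_mul, lieF, lieG, mul_comm]

theorem iteratedDerivWithin_comp_trajectory_eq_lieFIter {s : Set ℝ} (hs : IsOpen s)
    (hf : ContDiff ℝ ∞ f) (hψ : ContDiff ℝ ∞ ψ) (hx : ∀ t ∈ s, HasDerivAt x
      (fun a => f (t, x t) a + ∑ i, g (t, x t) a i * u t i) t)
    {N : ℕ} (hG : ∀ j < N, ∀ p, lieG g (lieFIter f ψ j) p = 0) :
    ∀ j ≤ N, ∀ t ∈ s,
      iteratedDerivWithin j (fun τ => ψ (τ, x τ)) s t = lieFIter f ψ j (t, x t) := by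
  refine iteratedDerivWithin_eq_of_hasDerivAt (F := fun j τ => lieFIter f ψ j (τ, x τ)) hs
    fun j hj t ht => ?_
  simpa [hG j hj, lieFIter_succ] using
    hasDerivAt_comp_trajectory ((hf.lieFIter hψ j).differentiable (by simp) _) (hx t ht)

end LieDerivative

theorem slack_variable_relations_general
    {n m r : ℕ} (f : ℝ × (Fin n → ℝ) → Fin n → ℝ)
    (g : ℝ × (Fin n → ℝ) → Fin n → Fin m → ℝ)
    (φ : ℝ × (Fin n → ℝ) → Fin r → ℝ)
    (hf : ContDiff ℝ (⊤ : ℕ∞) f)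
    (hφ : ContDiff ℝ (⊤ : ℕ∞) φ)
    (k : Fin r) (ρk : ℕ)
    (hzero : ∀ i : ℕ, i + 2 ≤ ρk →
      ∀ p : ℝ × (Fin n → ℝ), lieG g (lieFIter f (fun q => φ q k) i) p = 0)
    (I : Set ℝ) (hI : IsOpen I)
    (u : ℝ → Fin m → ℝ)
    (x : ℝ → Fin n → ℝ)
    (hx : ∀ t ∈ I, HasDerivAt x
      (fun a => f (t, x t) a + ∑ i, g (t, x t) a i * u t i) t)
    (z : ℝ → ℝ) (hz : ContDiffOn ℝ ((ρk - 1 : ℕ) : ℕ∞) z I)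
    (hzpos : ∀ t ∈ I, 0 < z t)
    (hcon : ∀ t ∈ I, φ (t, x t) k + z t ^ 2 / 2 = 0) :
    ∀ t ∈ I,
      z t = Real.sqrt (-2 * φ (t, x t) k) ∧
      ∀ i : ℕ, 1 ≤ i → i ≤ ρk - 1 →
        iteratedDerivWithin i z I t =
          -(lieFIter f (fun q => φ q k) i (t, x t) +
              (1 / 2) * ∑ j ∈ Finset.Ico 1 i, (i.choose j : ℝ) *
                iteratedDerivWithin (i - j) z I t * iteratedDerivWithin j z I t) /
            z t := by
  intro t ht
  have hslack : Set.EqOn (fun s => φ (s, x s) k) (fun s => -1 / 2 * z s ^ 2) I :=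
    fun s hs => by linarith [hcon s hs]
  refine ⟨?_, fun i hi₁ hi => ?_⟩
  · rw [show -2 * φ (t, x t) k = z t ^ 2 by linarith [hcon t ht], sqrt_sq (hzpos t ht).le]
  · have hlie := iteratedDerivWithin_comp_trajectory_eq_lieFIter hI hf (contDiff_pi.mp hφ k)
      hx (fun j hj => hzero j (by omega)) i hi t ht
    rw [iteratedDerivWithin_congr hslack ht, iteratedDerivWithin_const_mul_field,
      iteratedDerivWithin_sq hI.uniqueDiffOn ht ((hz t ht).of_le (by exact_mod_cast hi)) hi₁]
      at hlie
    rw [← hlie]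
    field_simp [(hzpos t ht).ne']
    ring

/-- **Slack-variable relations (Eqs. (15) of the paper).**
If `z_k > 0` on `I` and `φ_k(t,x(t)) + z_k(t)²/2 ≡ 0` on `I`, then `z_k = √(-2 φ_k(t,x(t)))`
and `z_k^{(i)} = -(L_f^i φ_k(t,x(t)) + S_{k,i-1}(t)) / z_k(t)` for `1 ≤ i ≤ ρ_k - 1`. -/
theorem slack_variable_relations
    {n m r : ℕ} (f : ℝ × (Fin n → ℝ) → Fin n → ℝ)
    (g : ℝ × (Fin n → ℝ) → Fin n → Fin m → ℝ)
    (φ : ℝ × (Fin n → ℝ) → Fin r → ℝ)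
    (hf : ContDiff ℝ (⊤ : ℕ∞) f) (hg : ContDiff ℝ (⊤ : ℕ∞) g)
    (hφ : ContDiff ℝ (⊤ : ℕ∞) φ)
    (k : Fin r) (ρk : ℕ) (hρk : 1 ≤ ρk)
    (hzero : ∀ i : ℕ, i + 2 ≤ ρk →
      ∀ p : ℝ × (Fin n → ℝ), lieG g (lieFIter f (fun q => φ q k) i) p = 0)
    (I : Set ℝ) (hI : IsOpen I) (hI' : I.OrdConnected)
    (u : ℝ → Fin m → ℝ) (hu : ContinuousOn u I)
    (x : ℝ → Fin n → ℝ)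
    (hx : ∀ t ∈ I, HasDerivAt x
      (fun a => f (t, x t) a + ∑ i, g (t, x t) a i * u t i) t)
    (z : ℝ → ℝ) (hz : ContDiffOn ℝ ((ρk - 1 : ℕ) : ℕ∞) z I)
    (hzpos : ∀ t ∈ I, 0 < z t)
    (hcon : ∀ t ∈ I, φ (t, x t) k + z t ^ 2 / 2 = 0) :
    ∀ t ∈ I,
      z t = Real.sqrt (-2 * φ (t, x t) k) ∧
      ∀ i : ℕ, 1 ≤ i → i ≤ ρk - 1 →
        iteratedDerivWithin i z I t =
          -(lieFIter f (fun q => φ q k) i (t, x t) +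
              (1 / 2) * ∑ j ∈ Finset.Ico 1 i, (i.choose j : ℝ) *
                iteratedDerivWithin (i - j) z I t * iteratedDerivWithin j z I t) /
            z t :=
  slack_variable_relations_general f g φ hf hφ k ρk hzero I hI u x hx z hz hzpos hcon
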